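/- Let D ≥ 3 be an integer. The Cayley graph of ℤ² with generating set {(1,0),(0,1)} does not have a coexact 1-Laplacian spectral gap for D. Equivalently: for every ε > 0 there exists a finitely supported closed 1-cochain f on this Cayley graph with Σ_{e∈E} f(e)² > 0 and Σ_{c face of parameter D} ((df)(c))² < ε·Σ_{e∈E} f(e)². -/

import Mathlib

/-- The Cayley graph of a group `Γ` with respect to a finite generating set `S`:
distinct `g, h` are adjacent iff `g⁻¹ * h ∈ S ∪ S⁻¹`. -/
def cayley {Γ : Type*} [Group Γ] (S : Finset Γ) : SimpleGraph Γ where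
  Adj g h := g ≠ h ∧ (g⁻¹ * h ∈ S ∨ h⁻¹ * g ∈ S)
  symm := ⟨fun g h ⟨hne, hmem⟩ => ⟨hne.symm, hmem.symm⟩⟩
  loopless := ⟨fun g ⟨hne, _⟩ => hne rfl⟩

/-- The boundary `∂f` of a 1-cochain `f` on the oriented edge set `E = Γ × S` of the
Cayley graph: `∂f(v) = Σ_{s∈S} (f(v·s⁻¹, s) − f(v,s))`. -/
def cayBdry {Γ : Type*} [Group Γ] (S : Finset Γ) (f : Γ × ↥S → ℝ) (v : Γ) : ℝ :=
  ∑ s : ↥S, (f (v * (s : Γ)⁻¹, s) - f (v, s))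

open Classical in
/-- The signed total value of the 1-cochain `f` over the oriented step from `u` to `v`:
edges `(u,s)` with `u·s = v` count positively, edges `(v,s)` with `v·s = u` negatively. -/
noncomputable def cayStep {Γ : Type*} [Group Γ] (S : Finset Γ) (f : Γ × ↥S → ℝ)
    (u v : Γ) : ℝ :=
  (∑ s : ↥S, if u * (s : Γ) = v then f (u, s) else 0) -
    (∑ s : ↥S, if v * (s : Γ) = u then f (v, s) else 0)

/-- The signed sum of a 1-cochain `f` along a walk `w` of the Cayley graph. -/
noncomputable def cayWalkSum {Γ : Type*} [Group Γ] (S : Finset Γ) (f : Γ × ↥S → ℝ)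
    {u v : Γ} (w : (cayley S).Walk u v) : ℝ :=
  (w.darts.map (fun d => cayStep S f d.toProd.1 d.toProd.2)).sum

/-- A set of (unoriented) edges of a simple graph `H` is a face of parameter `D` if it is
the edge set of some cycle of `H` of length at most `D`.  A cycle is determined, up to
rotation and reversal, by its edge set. -/
def IsFaceSet {V : Type*} (H : SimpleGraph V) (D : ℕ) (c : Set (Sym2 V)) : Prop :=
  ∃ (v : V) (w : H.Walk v v), w.IsCycle ∧ w.length ≤ D ∧ {e | e ∈ w.edges} = c

/-- The type of faces of parameter `D` of a simple graph `H`. -/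
def Face {V : Type*} (H : SimpleGraph V) (D : ℕ) : Type _ :=
  {c : Set (Sym2 V) // IsFaceSet H D c}

/-- `(df)(c)` for a 1-cochain `f` on the Cayley graph and a face `c`: the signed sum of
`f` along a traversal of the cycle `c` (a chosen orientation of the face). -/
noncomputable def cayFaceVal {Γ : Type*} [Group Γ] (S : Finset Γ) (D : ℕ)
    (f : Γ × ↥S → ℝ) (c : Face (cayley S) D) : ℝ :=
  cayWalkSum S f c.2.choose_spec.choose

/-- `Cay(Γ,S)` has a coexact 1-Laplacian spectral gap for `D`: there is `ε > 0` with
`ε·Σ_e f(e)² ≤ Σ_{c face} ((df)(c))²` for every finitely supported closed 1-cochain `f`. -/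
noncomputable def CayHasGap {Γ : Type*} [Group Γ] (S : Finset Γ) (D : ℕ) : Prop :=
  ∃ ε : ℝ, 0 < ε ∧ ∀ f : Γ × ↥S → ℝ, (Function.support f).Finite →
    (∀ v, cayBdry S f v = 0) →
    ε * ∑' e : Γ × ↥S, f e ^ 2 ≤ ∑' c : Face (cayley S) D, cayFaceVal S D f c ^ 2

/-- The group `ℤ²` (written multiplicatively) with its standard generating set
`{(1,0), (0,1)}`. -/
def Z2gens : Finset (Multiplicative (ℤ × ℤ)) :=
  {Multiplicative.ofAdd ((1 : ℤ), (0 : ℤ)), Multiplicative.ofAdd ((0 : ℤ), (1 : ℤ))}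

/-!
Boundaries of 2-chains on `ℤ²` are closed 1-cochains. Take `f = ∂(B ⊗ B)`, where `B` is the
cubic discrete B-spline `1_{[0,2m)} * 1_{[0,2m)} * 1_{[0,2m)} * 1_{[0,2m)}`. Then `f` is at least
`m⁵` on a row of `m` edges, so `‖f‖² ≥ m¹¹`, while `f` changes by `O(m⁴)` along every edge.
Along a closed walk of length `≤ D` based at `v₀` one may subtract the cochain `e ↦ f (v₀, e.2)`,
which is the differential of a linear function and so sums to zero around closed walks; hence every
face value is `O(D² m⁴)`. Only `O_D(m²)` faces meet the support of `f`, so the face energy is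
`O_D(m¹⁰) = o(‖f‖²)`.
-/

open SimpleGraph Finset

lemma SimpleGraph.Walk.abs_sub_le_of_mem_support {V R : Type*} [AddCommGroup R] [LinearOrder R]
    [IsOrderedAddMonoid R] {G : SimpleGraph V} (ρ : V → R) {L : R}
    (hρ : ∀ a b, G.Adj a b → |ρ a - ρ b| ≤ L) {u v : V} (w : G.Walk u v) {p : V}
    (hp : p ∈ w.support) : |ρ p - ρ u| ≤ w.length • L := by
  induction w with
  | nil => simp_all
  | @cons a b c h q ih =>
    have hL : 0 ≤ L := (abs_nonneg _).trans (hρ a b h)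
    rw [Walk.support_cons, List.mem_cons] at hp
    rw [Walk.length_cons, succ_nsmul]
    rcases hp with rfl | hp
    · simpa using add_nonneg (nsmul_nonneg hL _) hL
    · calc |ρ p - ρ a| ≤ |ρ p - ρ b| + |ρ b - ρ a| := abs_sub_le _ _ _
        _ ≤ q.length • L + L := add_le_add (ih hp) (hρ b a h.symm)

lemma tsum_sq_le_card_mul_sq {α β : Type*} {F : α → ℝ} {φ : α → β} (hφ : Function.Injective φ)
    (T : Finset β) (hT : ∀ a, F a ≠ 0 → φ a ∈ T) {B : ℝ} (hB : ∀ a, |F a| ≤ B) :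
    ∑' a, F a ^ 2 ≤ T.card * B ^ 2 := by
  classical
  set P := T.preimage φ hφ.injOn
  have hsupp : ∀ a ∉ P, F a ^ 2 = 0 := fun a ha => by
    by_contra h
    exact ha (mem_preimage.2 (hT a (by simpa using h)))
  rw [tsum_eq_sum hsupp]
  calc ∑ a ∈ P, F a ^ 2 ≤ P.card • B ^ 2 := sum_le_card_nsmul _ _ _ fun a _ => by
        simpa [sq_abs] using pow_le_pow_left₀ (abs_nonneg _) (hB a) 2
    _ ≤ T.card * B ^ 2 := by
        rw [nsmul_eq_mul]
        gcongr
        exact card_le_card_of_injOn φ (fun a ha => mem_preimage.1 ha) hφ.injOn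

lemma List.finite_length_le_of_forall_mem {α : Type*} (T : Finset α) (n : ℕ) :
    {l : List α | l.length ≤ n ∧ ∀ x ∈ l, x ∈ T}.Finite := by
  refine ((List.finite_length_le T n).image (List.map Subtype.val)).subset ?_
  rintro l ⟨hl, hT⟩
  exact ⟨l.pmap Subtype.mk hT, by simpa using hl, by simp [List.map_pmap]⟩

section CayleyWalks

variable {Γ : Type*} [Group Γ] {S : Finset Γ}

lemma cayWalkSum_cons (f : Γ × ↥S → ℝ) {u x v : Γ} (h : (cayley S).Adj u x)
    (p : (cayley S).Walk x v) :
    cayWalkSum S f (.cons h p) = cayStep S f u x + cayWalkSum S f p := by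
  simp [cayWalkSum]

lemma cayStep_sub (f g : Γ × ↥S → ℝ) (u v : Γ) :
    cayStep S (f - g) u v = cayStep S f u v - cayStep S g u v := by
  simp only [cayStep, Pi.sub_apply, ← sum_sub_distrib]
  refine sum_congr rfl fun s _ => ?_
  split_ifs <;> ring

lemma cayWalkSum_sub (f g : Γ × ↥S → ℝ) {u v : Γ} (w : (cayley S).Walk u v) :
    cayWalkSum S (f - g) w = cayWalkSum S f w - cayWalkSum S g w := by
  induction w with
  | nil => simp [cayWalkSum]
  | cons h p ih => rw [cayWalkSum_cons, cayWalkSum_cons, cayWalkSum_cons, cayStep_sub, ih]; ring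

lemma abs_cayStep_le (f : Γ × ↥S → ℝ) (u v : Γ) :
    |cayStep S f u v| ≤ ∑ s : ↥S, |f (u, s)| + ∑ s : ↥S, |f (v, s)| := by
  classical
  have key : ∀ a b : Γ,
      |∑ s : ↥S, if a * (s : Γ) = b then f (a, s) else 0| ≤ ∑ s : ↥S, |f (a, s)| :=
    fun a b => (abs_sum_le_sum_abs _ _).trans <| sum_le_sum fun s _ => by split_ifs <;> simp
  exact (abs_sub _ _).trans (add_le_add (key u v) (key v u))

lemma abs_cayWalkSum_le (f : Γ × ↥S → ℝ) {K : ℝ} {u v : Γ} (w : (cayley S).Walk u v)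
    (hK : ∀ d ∈ w.darts, |cayStep S f d.fst d.snd| ≤ K) :
    |cayWalkSum S f w| ≤ w.length * K := by
  induction w with
  | nil => simp [cayWalkSum]
  | @cons a b c h p ih =>
    rw [cayWalkSum_cons, Walk.length_cons, Nat.cast_succ]
    have hstep := hK _ (List.mem_cons_self ..)
    have hrest := ih fun d hd => hK d (List.mem_cons_of_mem _ hd)
    linarith [abs_add_le (cayStep S f a b) (cayWalkSum S f p)]

lemma exists_ne_zero_of_cayWalkSum_ne_zero {f : Γ × ↥S → ℝ} {u v : Γ}
    {w : (cayley S).Walk u v} (hw : cayWalkSum S f w ≠ 0) :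
    ∃ p ∈ w.support, ∃ s : ↥S, f (p, s) ≠ 0 := by
  by_contra! hzero
  induction w with
  | nil => exact hw rfl
  | @cons a b c h p ih =>
    have hstep : cayStep S f a b = 0 := by
      simp [cayStep, hzero _ (Walk.start_mem_support _),
        hzero _ (Walk.support_cons h p ▸ List.mem_cons_of_mem _ p.start_mem_support)]
    rw [cayWalkSum_cons, hstep, zero_add] at hw
    exact ih hw fun q hq => hzero q (by simp [hq])

open Classical in
lemma sum_ite_mul_eq (F : Γ → ℝ) (u v : Γ) :
    ∑ s : ↥S, (if u * (s : Γ) = v then F s else 0) = if u⁻¹ * v ∈ S then F (u⁻¹ * v) else 0 := by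
  rw [sum_coe_sort S fun g => if u * g = v then F g else 0]
  simp_rw [← eq_inv_mul_iff_mul_eq, eq_comm (b := u⁻¹ * v)]
  exact sum_ite_eq S (u⁻¹ * v) F

lemma map_one_of_map_mul {χ : Γ → ℝ} (hχ : ∀ g h, χ (g * h) = χ g + χ h) : χ 1 = 0 := by
  simpa using hχ 1 1

/-- `hS` prevents an edge from being counted in both directions. -/
lemma cayStep_hom {χ : Γ → ℝ} (hχ : ∀ g h, χ (g * h) = χ g + χ h) (hS : ∀ s ∈ S, s⁻¹ ∉ S)
    {u v : Γ} (huv : (cayley S).Adj u v) :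
    cayStep S (fun e => χ e.2) u v = χ (u⁻¹ * v) := by
  have hinv : χ (v⁻¹ * u) = -χ (u⁻¹ * v) := by
    have := hχ (v⁻¹ * u) (u⁻¹ * v)
    rw [mul_assoc, mul_inv_cancel_left, inv_mul_cancel, map_one_of_map_mul hχ] at this
    linarith
  rw [cayStep, sum_ite_mul_eq, sum_ite_mul_eq]
  rcases huv.2 with h | h
  · have h' : v⁻¹ * u ∉ S := by simpa using hS _ h
    rw [if_pos h, if_neg h', sub_zero]
  · have h' : u⁻¹ * v ∉ S := by simpa using hS _ h
    rw [if_pos h, if_neg h', hinv, zero_sub, neg_neg]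

lemma cayWalkSum_hom {χ : Γ → ℝ} (hχ : ∀ g h, χ (g * h) = χ g + χ h) (hS : ∀ s ∈ S, s⁻¹ ∉ S)
    {u v : Γ} (w : (cayley S).Walk u v) :
    cayWalkSum S (fun e => χ e.2) w = χ (u⁻¹ * v) := by
  induction w with
  | nil => simpa [cayWalkSum] using (map_one_of_map_mul hχ).symm
  | @cons a b c h p ih =>
    rw [cayWalkSum_cons, cayStep_hom hχ hS h, ih, ← hχ]
    group

lemma abs_cayWalkSum_le_of_lipschitz (hS : ∀ s ∈ S, s⁻¹ ∉ S)
    (hext : ∀ a : ↥S → ℝ, ∃ χ : Γ → ℝ, (∀ g h, χ (g * h) = χ g + χ h) ∧ ∀ s : ↥S, χ s = a s)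
    {f : Γ × ↥S → ℝ} {L : ℝ} (hf : ∀ a b s, (cayley S).Adj a b → |f (a, s) - f (b, s)| ≤ L)
    {u : Γ} (w : (cayley S).Walk u u) :
    |cayWalkSum S f w| ≤ 2 * S.card * w.length ^ 2 * L := by
  obtain ⟨χ, hχ, hχf⟩ := hext fun s => f (u, s)
  set c : Γ × ↥S → ℝ := fun e => χ e.2
  have hsum : cayWalkSum S f w = cayWalkSum S (f - c) w := by
    rw [cayWalkSum_sub, cayWalkSum_hom hχ hS, inv_mul_cancel, map_one_of_map_mul hχ, sub_zero]
  have hnear : ∀ p ∈ w.support, ∑ s : ↥S, |(f - c) (p, s)| ≤ S.card * (w.length * L) := by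
    intro p hp
    refine (sum_le_card_nsmul _ _ (w.length * L) fun s _ => ?_).trans_eq
      (by rw [card_univ, Fintype.card_coe, nsmul_eq_mul])
    simpa [c, hχf] using
      w.abs_sub_le_of_mem_support (fun q => f (q, s)) (fun a b h => hf a b s h) hp
  refine hsum ▸ (abs_cayWalkSum_le _ w fun d hd => (abs_cayStep_le _ _ _).trans
    (add_le_add (hnear _ (w.dart_fst_mem_support_of_mem_darts hd))
      (hnear _ (w.dart_snd_mem_support_of_mem_darts hd)))).trans_eq ?_
  ring

end CayleyWalks

namespace Face

variable {V : Type*} {H : SimpleGraph V} {D : ℕ}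

noncomputable def base (c : Face H D) : V := c.2.choose

noncomputable def walk (c : Face H D) : H.Walk c.base c.base := c.2.choose_spec.choose

lemma length_walk_le (c : Face H D) : c.walk.length ≤ D := c.2.choose_spec.choose_spec.2.1

lemma edges_walk (c : Face H D) : {e | e ∈ c.walk.edges} = c.1 := c.2.choose_spec.choose_spec.2.2

end Face

section CayleyFaces

open scoped Pointwise

variable {Γ : Type*} [Group Γ] {S : Finset Γ}

def cayWord {u v : Γ} (w : (cayley S).Walk u v) : List Γ :=
  w.darts.map fun d => d.fst⁻¹ * d.snd

lemma length_cayWord {u v : Γ} (w : (cayley S).Walk u v) : (cayWord w).length = w.length := by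
  simp [cayWord]

lemma edges_eq_of_cayWord_eq {u u' v v' : Γ} (w : (cayley S).Walk u v)
    (w' : (cayley S).Walk u' v') (hu : u = u') (h : cayWord w = cayWord w') :
    w.edges = w'.edges := by
  induction w generalizing u' with
  | nil => cases w' <;> simp_all [cayWord]
  | @cons a b c _ p ih =>
    cases w' with
    | nil => simp [cayWord] at h
    | @cons _ b' _ _ p' =>
      simp only [cayWord, Walk.darts_cons, List.map_cons, List.cons.injEq] at h
      subst hu
      obtain rfl : b = b' := by simpa using h.1
      simp [ih p' rfl h.2]

lemma injective_base_cayWord (D : ℕ) :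
    Function.Injective fun c : Face (cayley S) D => (c.base, cayWord c.walk) := by
  intro c c' h
  simp only [Prod.mk.injEq] at h
  apply Subtype.ext
  rw [← c.edges_walk, ← c'.edges_walk, edges_eq_of_cayWord_eq _ _ h.1 h.2]

variable [DecidableEq Γ]

lemma mem_of_mem_cayWord {u v : Γ} (w : (cayley S).Walk u v) {g : Γ} (hg : g ∈ cayWord w) :
    g ∈ S ∪ S⁻¹ := by
  obtain ⟨d, -, rfl⟩ := List.mem_map.1 hg
  rcases d.adj.2 with h | h
  · exact mem_union_left _ h
  · exact mem_union_right _ (by simpa [mem_inv] using h)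

noncomputable def cayWords (S : Finset Γ) (D : ℕ) : Finset (List Γ) :=
  (List.finite_length_le_of_forall_mem (S ∪ S⁻¹) D).toFinset

lemma tsum_cayFaceVal_sq_le {D : ℕ} {f : Γ × ↥S → ℝ} {A : Finset Γ}
    (hA : ∀ c : Face (cayley S) D, cayFaceVal S D f c ≠ 0 → c.base ∈ A)
    {B : ℝ} (hB : ∀ c, |cayFaceVal S D f c| ≤ B) :
    ∑' c, cayFaceVal S D f c ^ 2 ≤ A.card * (cayWords S D).card * B ^ 2 := by
  refine (tsum_sq_le_card_mul_sq (injective_base_cayWord D) (A ×ˢ cayWords S D)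
    (fun c hc => ?_) hB).trans_eq (by rw [card_product, Nat.cast_mul])
  refine mem_product.2 ⟨hA c hc, ?_⟩
  simp only [cayWords, Set.Finite.mem_toFinset, Set.mem_ofPred_eq, length_cayWord]
  exact ⟨c.length_walk_le, fun g hg => mem_of_mem_cayWord _ hg⟩

end CayleyFaces

/-- The discrete B-spline `1_{[0,n)} * ⋯ * 1_{[0,n)}` with `k + 1` factors. -/
noncomputable def boxSpline (n : ℕ) : ℕ → ℤ → ℝ
  | 0, x => if 0 ≤ x ∧ x < n then 1 else 0
  | k + 1, x => ∑ a ∈ range n, boxSpline n k (x - a)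

namespace boxSpline

variable {n : ℕ}

lemma nonneg (k : ℕ) (x : ℤ) : 0 ≤ boxSpline n k x := by
  induction k generalizing x with
  | zero => simp only [boxSpline]; split_ifs <;> norm_num
  | succ k ih => exact sum_nonneg fun a _ => ih _

lemma le_pow (k : ℕ) (x : ℤ) : boxSpline n k x ≤ n ^ k := by
  induction k generalizing x with
  | zero => simp only [boxSpline]; split_ifs <;> norm_num
  | succ k ih =>
    refine (sum_le_card_nsmul _ _ _ fun a _ => ih _).trans_eq ?_
    rw [card_range, nsmul_eq_mul, pow_succ']

lemma eq_zero {k : ℕ} {x : ℤ} (hx : x < 0 ∨ (k + 1) * (n : ℤ) ≤ x) : boxSpline n k x = 0 := by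
  induction k generalizing x with
  | zero => simp only [boxSpline]; rw [if_neg]; omega
  | succ k ih =>
    refine sum_eq_zero fun a ha => ih ?_
    have := mem_range.1 ha
    push_cast at hx ⊢
    rcases hx with hx | hx
    · omega
    · right; nlinarith

/-- Differencing a box spline peels off one factor: `Δ (1_{[0,n)} * g) = g - g(· - n)`. -/
lemma sub_sub_one (k : ℕ) (x : ℤ) :
    boxSpline n (k + 1) x - boxSpline n (k + 1) (x - 1) =
      boxSpline n k x - boxSpline n k (x - n) := by
  simp only [boxSpline, ← sum_sub_distrib]
  convert sum_range_sub' (fun a : ℕ => boxSpline n k (x - a)) n using 3 <;> push_cast <;> ring_nf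

lemma abs_sub_sub_one_le (k : ℕ) (x : ℤ) :
    |boxSpline n (k + 1) x - boxSpline n (k + 1) (x - 1)| ≤ n ^ k := by
  rw [sub_sub_one]
  exact abs_sub_le_of_nonneg_of_le (nonneg _ _) (le_pow _ _) (nonneg _ _) (le_pow _ _)

lemma abs_second_diff_le (k : ℕ) (x : ℤ) :
    |(boxSpline n (k + 2) x - boxSpline n (k + 2) (x - 1)) -
      (boxSpline n (k + 2) (x - 1) - boxSpline n (k + 2) (x - 1 - 1))| ≤ 2 * n ^ k := by
  rw [sub_sub_one, sub_sub_one, show x - 1 - n = x - n - 1 by ring]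
  calc _ = |(boxSpline n (k + 1) x - boxSpline n (k + 1) (x - 1)) -
        (boxSpline n (k + 1) (x - n) - boxSpline n (k + 1) (x - n - 1))| := by congr 1; ring
    _ ≤ n ^ k + n ^ k := (abs_sub _ _).trans (add_le_add (abs_sub_sub_one_le k x)
        (abs_sub_sub_one_le k (x - n)))
    _ = 2 * n ^ k := by ring

end boxSpline

lemma le_sum_range_sub {h : ℤ → ℝ} (h0 : ∀ y, 0 ≤ h y) {p : ℤ} {l n : ℕ} {c : ℝ}
    (hc : ∀ y, p ≤ y → y < p + l → c ≤ h y) {x : ℤ}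
    (hx₁ : p + l - 1 ≤ x) (hx₂ : x < p + n) :
    l * c ≤ ∑ a ∈ range n, h (x - a) := by
  obtain ⟨i, rfl⟩ : ∃ i : ℕ, x = p + l - 1 + i := ⟨(x - (p + l - 1)).toNat, by omega⟩
  have hsub : Ico i (i + l) ⊆ range n := fun a ha => by
    simp only [mem_Ico, mem_range] at ha ⊢; omega
  calc (l : ℝ) * c = (Ico i (i + l)).card • c := by simp
    _ ≤ ∑ a ∈ Ico i (i + l), h (p + l - 1 + i - a) :=
        card_nsmul_le_sum _ _ _ fun a ha => hc _ (by simp only [mem_Ico] at ha; omega)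
          (by simp only [mem_Ico] at ha; omega)
    _ ≤ ∑ a ∈ range n, h (p + l - 1 + i - a) :=
        sum_le_sum_of_subset_of_nonneg hsub fun _ _ _ => h0 _

lemma pow_le_boxSpline (m k : ℕ) {x : ℤ} (hx₁ : (k + 1) * (m : ℤ) - 1 ≤ x)
    (hx₂ : x < (k + 2) * (m : ℤ)) : (m : ℝ) ^ (k + 1) ≤ boxSpline (2 * m) (k + 1) x := by
  induction k generalizing x with
  | zero =>
    have h := le_sum_range_sub (boxSpline.nonneg (n := 2 * m) 0) (p := 0) (l := m) (n := 2 * m)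
      (c := 1) (x := x)
      (fun y hy₁ hy₂ => by simp only [boxSpline]; rw [if_pos (by push_cast; omega)])
      (by push_cast at hx₁ ⊢; omega) (by push_cast at hx₂ ⊢; omega)
    simpa [boxSpline] using h
  | succ k ih =>
    have h := le_sum_range_sub (boxSpline.nonneg (n := 2 * m) (k + 1)) (p := (k + 1) * m)
      (l := m) (n := 2 * m) (c := (m : ℝ) ^ (k + 1)) (x := x)
      (fun y hy₁ hy₂ => ih (by nlinarith) (by nlinarith))
      (by push_cast at hx₁ ⊢; nlinarith) (by push_cast at hx₂ ⊢; nlinarith)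
    rw [pow_succ']
    simpa only [boxSpline] using h

local notation "ℤ²" => Multiplicative (ℤ × ℤ)

namespace Z2gens

def e₁ : ↥Z2gens := ⟨.ofAdd (1, 0), by simp [Z2gens]⟩

def e₂ : ↥Z2gens := ⟨.ofAdd (0, 1), by simp [Z2gens]⟩

lemma eq_e₁_or_eq_e₂ (s : ↥Z2gens) : s = e₁ ∨ s = e₂ := by
  obtain ⟨g, hg⟩ := s
  simp only [Z2gens, mem_insert, mem_singleton] at hg
  rcases hg with rfl | rfl
  exacts [.inl rfl, .inr rfl]

lemma sum_univ (F : ↥Z2gens → ℝ) : ∑ s, F s = F e₁ + F e₂ := by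
  have : (univ : Finset ↥Z2gens) = {e₁, e₂} := by
    ext s; simpa using eq_e₁_or_eq_e₂ s
  rw [this, sum_pair (by decide)]

lemma card_eq : Z2gens.card = 2 := by decide

lemma inv_notMem : ∀ s ∈ Z2gens, s⁻¹ ∉ Z2gens := by decide

lemma exists_hom (a : ↥Z2gens → ℝ) :
    ∃ χ : ℤ² → ℝ, (∀ g h, χ (g * h) = χ g + χ h) ∧ ∀ s : ↥Z2gens, χ s = a s := by
  refine ⟨fun v => a e₁ * v.toAdd.1 + a e₂ * v.toAdd.2, fun g h => ?_, fun s => ?_⟩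
  · simp only [toAdd_mul, Prod.fst_add, Prod.snd_add, Int.cast_add]; ring
  · rcases eq_e₁_or_eq_e₂ s with rfl | rfl <;> simp [e₁, e₂]

lemma abs_sub_le_one_of_adj {p q : ℤ²} (h : (cayley Z2gens).Adj p q) :
    |p.toAdd.1 - q.toAdd.1| ≤ 1 ∧ |p.toAdd.2 - q.toAdd.2| ≤ 1 := by
  have key : ∀ a b : ℤ², a⁻¹ * b ∈ Z2gens →
      |a.toAdd.1 - b.toAdd.1| ≤ 1 ∧ |a.toAdd.2 - b.toAdd.2| ≤ 1 := by
    intro a b hab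
    simp only [Z2gens, mem_insert, mem_singleton] at hab
    rcases hab with hab | hab <;>
    · have := congrArg Multiplicative.toAdd hab
      simp only [toAdd_mul, toAdd_inv, toAdd_ofAdd, Prod.ext_iff, Prod.fst_add, Prod.snd_add,
        Prod.fst_neg, Prod.snd_neg] at this
      constructor <;> rw [abs_le] <;> omega
  rcases h.2 with h | h
  · exact key p q h
  · rw [abs_sub_comm, abs_sub_comm p.toAdd.2]; exact key q p h

end Z2gens

open Z2gens

/-- The boundary of the 2-chain giving weight `φ v` to the unit square with lower left corner `v`,
each square oriented counterclockwise. -/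
noncomputable def curl (φ : ℤ² → ℝ) : ℤ² × ↥Z2gens → ℝ := fun e =>
  if e.2 = e₁ then φ e.1 - φ (e.1 * (e₂ : ℤ²)⁻¹) else φ (e.1 * (e₁ : ℤ²)⁻¹) - φ e.1

lemma cayBdry_curl (φ : ℤ² → ℝ) (v : ℤ²) : cayBdry Z2gens (curl φ) v = 0 := by
  have h₁₂ : e₁ ≠ e₂ := by decide
  simp only [cayBdry, sum_univ, curl, if_pos, if_neg h₁₂.symm, mul_right_comm v (e₂ : ℤ²)⁻¹]
  ring

lemma abs_sub_le_of_abs_sub_one_le {a : ℤ → ℝ} {A' : ℝ} (ha : ∀ x, |a x - a (x - 1)| ≤ A')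
    {x x' : ℤ} (h : |x - x'| ≤ 1) : |a x - a x'| ≤ A' := by
  rw [abs_le] at h
  obtain rfl | rfl | rfl : x' = x - 1 ∨ x' = x ∨ x' = x + 1 := by omega
  · exact ha x
  · simpa using (abs_nonneg _).trans (ha x')
  · simpa [abs_sub_comm] using ha (x + 1)

lemma abs_mul_sub_mul_le {a b : ℤ → ℝ} {A A' B B' : ℝ} (ha : ∀ x, |a x| ≤ A)
    (ha' : ∀ x, |a x - a (x - 1)| ≤ A') (hb : ∀ y, |b y| ≤ B) (hb' : ∀ y, |b y - b (y - 1)| ≤ B')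
    {x x' y y' : ℤ} (hx : |x - x'| ≤ 1) (hy : |y - y'| ≤ 1) :
    |a x * b y - a x' * b y'| ≤ A' * B + A * B' := by
  have h₁ := abs_sub_le_of_abs_sub_one_le ha' hx
  have h₂ := abs_sub_le_of_abs_sub_one_le hb' hy
  calc |a x * b y - a x' * b y'| = |(a x - a x') * b y + a x' * (b y - b y')| := by ring_nf
    _ ≤ |a x - a x'| * |b y| + |a x'| * |b y - b y'| := by
        rw [← abs_mul, ← abs_mul]; exact abs_add_le _ _
    _ ≤ A' * B + A * B' := by
        gcongr
        exacts [(abs_nonneg _).trans h₁, hb y, (abs_nonneg _).trans (ha x'), ha x']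

noncomputable def bump (m : ℕ) : ℤ → ℝ := boxSpline (2 * m) 3

namespace bump

variable (m : ℕ)

lemma abs_le (x : ℤ) : |bump m x| ≤ (2 * m) ^ 3 := by
  rw [bump, abs_of_nonneg (boxSpline.nonneg _ _)]
  exact_mod_cast boxSpline.le_pow 3 x

lemma abs_sub_le (x : ℤ) : |bump m x - bump m (x - 1)| ≤ (2 * m) ^ 2 := by
  exact_mod_cast boxSpline.abs_sub_sub_one_le 2 x

lemma abs_second_diff_le (x : ℤ) :
    |(bump m x - bump m (x - 1)) - (bump m (x - 1) - bump m (x - 1 - 1))| ≤ 2 * (2 * m) := by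
  simpa [bump] using boxSpline.abs_second_diff_le (n := 2 * m) 1 x

lemma eq_zero {x : ℤ} (hx : x < 0 ∨ 8 * (m : ℤ) ≤ x) : bump m x = 0 :=
  boxSpline.eq_zero (by push_cast; omega)

lemma pow_le {x : ℤ} (hx₁ : 3 * (m : ℤ) - 1 ≤ x) (hx₂ : x < 4 * m) : (m : ℝ) ^ 3 ≤ bump m x :=
  pow_le_boxSpline m 2 (by push_cast; omega) (by push_cast; omega)

lemma sq_le_sub : (m : ℝ) ^ 2 ≤ bump m (2 * m - 1) - bump m (2 * m - 1 - 1) := by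
  have h₀ : boxSpline (2 * m) 2 (2 * m - 1 - ↑(2 * m)) = 0 :=
    boxSpline.eq_zero (Or.inl (by push_cast; omega))
  rw [bump, boxSpline.sub_sub_one, h₀, sub_zero]
  exact pow_le_boxSpline m 1 (by push_cast; omega) (by push_cast; omega)

end bump

noncomputable def bumpCurl (m : ℕ) : ℤ² × ↥Z2gens → ℝ :=
  curl fun v => bump m v.toAdd.1 * bump m v.toAdd.2

lemma bumpCurl_e₁ (m : ℕ) (v : ℤ²) :
    bumpCurl m (v, e₁) = bump m v.toAdd.1 * (bump m v.toAdd.2 - bump m (v.toAdd.2 - 1)) := by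
  simp [bumpCurl, curl, e₂, sub_eq_add_neg, mul_add]

lemma bumpCurl_e₂ (m : ℕ) (v : ℤ²) :
    bumpCurl m (v, e₂) = -(bump m v.toAdd.1 - bump m (v.toAdd.1 - 1)) * bump m v.toAdd.2 := by
  have h₂₁ : e₂ ≠ e₁ := by decide
  rw [bumpCurl, curl, if_neg h₂₁]
  simp [e₁, sub_eq_add_neg]
  ring

lemma abs_bumpCurl_sub_le (m : ℕ) {p q : ℤ²} (h : (cayley Z2gens).Adj p q) (s : ↥Z2gens) :
    |bumpCurl m (p, s) - bumpCurl m (q, s)| ≤ 3 * (2 * m) ^ 4 := by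
  obtain ⟨hx, hy⟩ := abs_sub_le_one_of_adj h
  rcases eq_e₁_or_eq_e₂ s with rfl | rfl
  · rw [bumpCurl_e₁, bumpCurl_e₁]
    refine (abs_mul_sub_mul_le (bump.abs_le m) (bump.abs_sub_le m) (bump.abs_sub_le m)
      (bump.abs_second_diff_le m) hx hy).trans_eq (by ring)
  · rw [bumpCurl_e₂, bumpCurl_e₂]
    refine (abs_mul_sub_mul_le (a := fun x => -(bump m x - bump m (x - 1)))
      (fun x => by rw [abs_neg]; exact bump.abs_sub_le m x)
      (fun x => by rw [← abs_neg]; convert bump.abs_second_diff_le m x using 2; ring)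
      (bump.abs_le m) (bump.abs_sub_le m) hx hy).trans_eq (by ring)

noncomputable def gridBox (a b : ℤ) : Finset ℤ² :=
  (Icc (a, a) (b, b)).map Multiplicative.ofAdd.toEmbedding

lemma mem_gridBox {a b : ℤ} {v : ℤ²} :
    v ∈ gridBox a b ↔ (a ≤ v.toAdd.1 ∧ v.toAdd.1 ≤ b) ∧ (a ≤ v.toAdd.2 ∧ v.toAdd.2 ≤ b) := by
  simp only [gridBox, mem_map_equiv, mem_Icc, Prod.le_def]
  tauto

lemma card_gridBox (a b : ℤ) : (gridBox a b).card = (b + 1 - a).toNat ^ 2 := by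
  simp [gridBox, Icc_prod_def, sq]

lemma bumpCurl_eq_zero (m : ℕ) {v : ℤ²} (hv : v ∉ gridBox 0 (8 * m)) (s : ↥Z2gens) :
    bumpCurl m (v, s) = 0 := by
  have vanish : ∀ x : ℤ, ¬(0 ≤ x ∧ x ≤ 8 * m) → bump m x = 0 ∧ bump m (x - 1) = 0 :=
    fun x hx => ⟨bump.eq_zero m (by omega), bump.eq_zero m (by omega)⟩
  rw [mem_gridBox, not_and_or] at hv
  rcases eq_e₁_or_eq_e₂ s with rfl | rfl <;> rcases hv with h | h <;>
    simp [bumpCurl_e₁, bumpCurl_e₂, vanish _ h]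

lemma bumpCurl_eq_zero_of_notMem (m : ℕ) {e : ℤ² × ↥Z2gens}
    (he : e ∉ gridBox 0 (8 * m) ×ˢ (univ : Finset ↥Z2gens)) : bumpCurl m e = 0 :=
  bumpCurl_eq_zero m (by simpa using he) e.2

lemma finite_support_bumpCurl (m : ℕ) : (Function.support (bumpCurl m)).Finite :=
  (gridBox 0 (8 * m) ×ˢ univ).finite_toSet.subset fun _ he =>
    not_not.1 fun h => he (bumpCurl_eq_zero_of_notMem m h)

lemma pow_le_tsum_bumpCurl_sq (m : ℕ) : (m : ℝ) ^ 11 ≤ ∑' e, bumpCurl m e ^ 2 := by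
  let row : ℤ ↪ ℤ² × ↥Z2gens :=
    ⟨fun x => (.ofAdd (x, 2 * m - 1), e₁), fun x y h => by simpa using congrArg (·.1.toAdd.1) h⟩
  have hterm : ∀ x ∈ Ico (3 * (m : ℤ)) (4 * m),
      ((m : ℝ) ^ 3 * m ^ 2) ^ 2 ≤ bumpCurl m (.ofAdd (x, 2 * m - 1), e₁) ^ 2 := fun x hx => by
      rw [mem_Ico] at hx
      have hx' := bump.pow_le m (by omega) hx.2
      rw [bumpCurl_e₁, toAdd_ofAdd]
      exact pow_le_pow_left₀ (by positivity) (mul_le_mul hx' (bump.sq_le_sub m) (by positivity)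
        ((by positivity : (0 : ℝ) ≤ m ^ 3).trans hx')) 2
  calc (m : ℝ) ^ 11 = (Ico (3 * (m : ℤ)) (4 * m)).card • ((m : ℝ) ^ 3 * m ^ 2) ^ 2 := by
        rw [Int.card_Ico, nsmul_eq_mul, show 4 * (m : ℤ) - 3 * m = m by ring, Int.toNat_natCast]
        ring
    _ ≤ ∑ x ∈ Ico (3 * (m : ℤ)) (4 * m), bumpCurl m (.ofAdd (x, 2 * m - 1), e₁) ^ 2 :=
        card_nsmul_le_sum _ _ _ hterm
    _ = ∑ e ∈ (Ico (3 * (m : ℤ)) (4 * m)).map row, bumpCurl m e ^ 2 :=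
        (sum_map _ row fun e => bumpCurl m e ^ 2).symm
    _ ≤ ∑' e, bumpCurl m e ^ 2 := Summable.sum_le_tsum _ (fun _ _ => sq_nonneg _)
        (summable_of_ne_finset_zero fun e he => by
          rw [bumpCurl_eq_zero_of_notMem m he, sq, mul_zero])

lemma abs_cayFaceVal_bumpCurl_le (m D : ℕ) (c : Face (cayley Z2gens) D) :
    |cayFaceVal Z2gens D (bumpCurl m) c| ≤ 12 * D ^ 2 * (2 * m) ^ 4 := by
  have hlen : (c.walk.length : ℝ) ≤ D := by exact_mod_cast c.length_walk_le
  refine (abs_cayWalkSum_le_of_lipschitz Z2gens.inv_notMem Z2gens.exists_hom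
    (fun a b s h => abs_bumpCurl_sub_le m h s) c.walk).trans ?_
  rw [Z2gens.card_eq]
  calc _ = 12 * (c.walk.length : ℝ) ^ 2 * (2 * m) ^ 4 := by push_cast; ring
    _ ≤ 12 * D ^ 2 * (2 * m) ^ 4 := by gcongr

lemma base_mem_gridBox_of_cayFaceVal_ne_zero (m D : ℕ) {c : Face (cayley Z2gens) D}
    (hc : cayFaceVal Z2gens D (bumpCurl m) c ≠ 0) : c.base ∈ gridBox (-D) (8 * m + D) := by
  obtain ⟨p, hp, s, hps⟩ := exists_ne_zero_of_cayWalkSum_ne_zero hc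
  have hp_box : p ∈ gridBox 0 (8 * m) := not_not.1 fun h => hps (bumpCurl_eq_zero m h s)
  have h₁ := c.walk.abs_sub_le_of_mem_support (fun v => v.toAdd.1)
    (fun a b h => (abs_sub_le_one_of_adj h).1) hp
  have h₂ := c.walk.abs_sub_le_of_mem_support (fun v => v.toAdd.2)
    (fun a b h => (abs_sub_le_one_of_adj h).2) hp
  have hlen : (c.walk.length : ℤ) ≤ D := by exact_mod_cast c.length_walk_le
  simp only [nsmul_eq_mul, mul_one, abs_le] at h₁ h₂
  rw [mem_gridBox] at hp_box ⊢
  omega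

lemma exists_tsum_cayFaceVal_bumpCurl_sq_le (D : ℕ) : ∃ C : ℝ, ∀ m : ℕ, 1 ≤ m →
    ∑' c, cayFaceVal Z2gens D (bumpCurl m) c ^ 2 ≤ C * m ^ 10 := by
  refine ⟨(2 * D + 9) ^ 2 * (cayWords Z2gens D).card * (192 * D ^ 2) ^ 2, fun m hm => ?_⟩
  have hm' : (1 : ℝ) ≤ m := by exact_mod_cast hm
  have hbox : ((gridBox (-D) (8 * m + D)).card : ℝ) = (8 * m + 2 * D + 1) ^ 2 := by
    rw [card_gridBox,
      show 8 * (m : ℤ) + D + 1 - -D = ((8 * m + 2 * D + 1 : ℕ) : ℤ) by push_cast; ring,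
      Int.toNat_natCast]
    push_cast; ring
  refine (tsum_cayFaceVal_sq_le (fun _ => base_mem_gridBox_of_cayFaceVal_ne_zero m D)
    (abs_cayFaceVal_bumpCurl_le m D)).trans ?_
  rw [hbox]
  calc (8 * m + 2 * D + 1 : ℝ) ^ 2 * (cayWords Z2gens D).card * (12 * D ^ 2 * (2 * m) ^ 4) ^ 2
      ≤ ((2 * D + 9) * m) ^ 2 * (cayWords Z2gens D).card * (12 * D ^ 2 * (2 * m) ^ 4) ^ 2 := by
        gcongr; nlinarith
    _ = _ := by ring

lemma exists_closed_tsum_cayFaceVal_sq_lt (D : ℕ) {ε : ℝ} (hε : 0 < ε) :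
    ∃ f : ℤ² × ↥Z2gens → ℝ, (Function.support f).Finite ∧ (∀ v, cayBdry Z2gens f v = 0) ∧
      0 < ∑' e, f e ^ 2 ∧ ∑' c, cayFaceVal Z2gens D f c ^ 2 < ε * ∑' e, f e ^ 2 := by
  obtain ⟨C, hC⟩ := exists_tsum_cayFaceVal_bumpCurl_sq_le D
  obtain ⟨m, hm⟩ := exists_nat_gt (max 1 (C / ε))
  have hm₁ : (1 : ℝ) < m := (le_max_left _ _).trans_lt hm
  have hCm : C < ε * m := (div_lt_iff₀' hε).1 ((le_max_right _ _).trans_lt hm)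
  have henergy := pow_le_tsum_bumpCurl_sq m
  refine ⟨bumpCurl m, finite_support_bumpCurl m, cayBdry_curl _,
    (by positivity : (0 : ℝ) < m ^ 11).trans_le henergy, ?_⟩
  calc _ ≤ C * m ^ 10 := hC m (by exact_mod_cast hm₁.le)
    _ < ε * m * m ^ 10 := by gcongr
    _ = ε * m ^ 11 := by ring
    _ ≤ ε * ∑' e, bumpCurl m e ^ 2 := by gcongr

theorem coexact_stmt_11_general (D : ℕ) :
    ¬ CayHasGap Z2gens D ∧
    ∀ ε : ℝ, 0 < ε → ∃ f : Multiplicative (ℤ × ℤ) × ↥Z2gens → ℝ,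
      (Function.support f).Finite ∧ (∀ v, cayBdry Z2gens f v = 0) ∧
      0 < ∑' e : Multiplicative (ℤ × ℤ) × ↥Z2gens, f e ^ 2 ∧
      ∑' c : Face (cayley Z2gens) D, cayFaceVal Z2gens D f c ^ 2 <
        ε * ∑' e : Multiplicative (ℤ × ℤ) × ↥Z2gens, f e ^ 2 := by
  refine ⟨fun ⟨ε, hε, hgap⟩ => ?_, fun ε hε => exists_closed_tsum_cayFaceVal_sq_lt D hε⟩
  obtain ⟨f, hfin, hclosed, -, hlt⟩ := exists_closed_tsum_cayFaceVal_sq_lt D hε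
  exact (hgap f hfin hclosed).not_gt hlt

/-- For every `D ≥ 3`, the Cayley graph of `ℤ²` with generating set
`{(1,0),(0,1)}` does not have a coexact 1-Laplacian spectral gap for `D`; equivalently,
for every `ε > 0` there is a finitely supported closed 1-cochain `f` with
`Σ_e f(e)² > 0` and `Σ_{c face} ((df)(c))² < ε·Σ_e f(e)²`. -/
theorem coexact_stmt_11 (D : ℕ) (hD : 3 ≤ D) :
    ¬ CayHasGap Z2gens D ∧
    ∀ ε : ℝ, 0 < ε → ∃ f : Multiplicative (ℤ × ℤ) × ↥Z2gens → ℝ,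
      (Function.support f).Finite ∧ (∀ v, cayBdry Z2gens f v = 0) ∧
      0 < ∑' e : Multiplicative (ℤ × ℤ) × ↥Z2gens, f e ^ 2 ∧
      ∑' c : Face (cayley Z2gens) D, cayFaceVal Z2gens D f c ^ 2 <
        ε * ∑' e : Multiplicative (ℤ × ℤ) × ↥Z2gens, f e ^ 2 :=
  coexact_stmt_11_general D
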